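/- arXiv:1412.0371 — 2 statements merged into one kernel-verified Lean document; each statement's English description precedes it below -/
import Mathlib

section
/- The period of a tableau is unique, and any two tableaux representing the same combinatorial type have the same periodicity. -/
/- Common framework: arrangements of convex bodies in the plane, dual support
systems on the cylinder, swap pairs and combinatorial types, following
Dobbins–Holmsen–Hubard, "Realization spaces of arrangements of convex bodies". -/

open scoped Classical

noncomputable section

namespace RealBody

/-! ### Points, order types -/

/-- Twice the signed area of the triangle `p q r`; its sign is the orientation. -/
def ptOrient (p q r : ℝ × ℝ) : ℝ :=
  (q.1 - p.1) * (r.2 - p.2) - (q.2 - p.2) * (r.1 - p.1)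

/-- The order type of an indexed planar point family. -/
def orderTypeOf {ι : Type*} (P : ι → ℝ × ℝ) : ι → ι → ι → SignType :=
  fun a b c => SignType.sign (ptOrient (P a) (P b) (P c))

/-- The axioms of a rank-3 acyclic chirotope (an abstract order type):
nontrivial, alternating, the Grassmann-Plücker exchange relations, acyclic. -/
structure IsOrderType {ι : Type*} (χ : ι → ι → ι → SignType) : Prop where
  nontrivial : ∃ a b c, χ a b c ≠ 0
  alt₁ : ∀ a b c, χ b a c = -χ a b c
  alt₂ : ∀ a b c, χ a c b = -χ a b c
  exchange : ∀ a b c d e, χ a b c * χ a d e = 1 →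
    χ a b d * χ a c e = 1 ∨ χ a b e * χ a d c = 1
  acyclic : ∀ a b c d, ¬(0 ≤ χ b c d ∧ χ a c d ≤ 0 ∧ 0 ≤ χ a b d ∧ χ a b c ≤ 0 ∧
    (χ b c d ≠ 0 ∨ χ a c d ≠ 0 ∨ χ a b d ≠ 0 ∨ χ a b c ≠ 0))

/-- A simple order type: a uniform (nowhere zero on distinct triples) acyclic
rank-3 chirotope. -/
def IsSimpleOrderType {ι : Type*} (χ : ι → ι → ι → SignType) : Prop :=
  IsOrderType χ ∧ ∀ a b c : ι, a ≠ b → a ≠ c → b ≠ c → χ a b c ≠ 0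

/-! ### Support functions and arrangements -/

/-- The support function of a planar set, as a (2π-periodic) function of the
angle `θ` parametrizing the unit circle: `h_A(θ) = sup_{p ∈ A} ⟨(cos θ, sin θ), p⟩`. -/
def suppFn (A : Set (ℝ × ℝ)) (θ : ℝ) : ℝ :=
  sSup ((fun p : ℝ × ℝ => p.1 * Real.cos θ + p.2 * Real.sin θ) '' A)

/-- Two functions (of the circle parameter) cross at `θ`: they agree at `θ` and
their difference changes sign there, with `θ` an isolated coincidence. -/
def CrossesAt (g h : ℝ → ℝ) (θ : ℝ) : Prop :=
  g θ = h θ ∧ ∃ ε > 0, ∀ s ∈ Set.Ioo (θ - ε) θ, ∀ t ∈ Set.Ioo θ (θ + ε),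
    (g s - h s) * (g t - h t) < 0

/-- The crossing points (in the fundamental domain `(0, 2π] × ℝ` of the cylinder)
of an indexed family of curves given as graphs of functions.  For an arrangement
these are the common supporting tangents of pairs of bodies. -/
def crossings {L : Type*} (f : L → ℝ → ℝ) : Set (ℝ × ℝ) :=
  {p | p.1 ∈ Set.Ioc 0 (2 * Real.pi) ∧ ∃ i j : L, i ≠ j ∧ f i p.1 = p.2 ∧ f j p.1 = p.2}

/-- An arrangement of convex bodies: a finite nonempty indexed family of compact
convex sets in the plane such that (in dual terms) each pair of support curves
crosses at each point of intersection, no three support curves meet, and there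
are finitely many crossings (common supporting tangents). -/
structure Arrangement (L : Type*) [Fintype L] where
  nonemptyIdx : Nonempty L
  body : L → Set (ℝ × ℝ)
  isCompact : ∀ i, IsCompact (body i)
  convex : ∀ i, Convex ℝ (body i)
  nonempty : ∀ i, (body i).Nonempty
  transversal : ∀ i j, i ≠ j → ∀ θ : ℝ, suppFn (body i) θ = suppFn (body j) θ →
    CrossesAt (suppFn (body i)) (suppFn (body j)) θ
  noTriple : ∀ i j k : L, i ≠ j → i ≠ k → j ≠ k → ∀ θ : ℝ,
    ¬(suppFn (body i) θ = suppFn (body j) θ ∧ suppFn (body i) θ = suppFn (body k) θ)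
  finTangents : (crossings fun i => suppFn (body i)).Finite

/-- The dual support curve of a body, drawn on the cylinder `S¹ × ℝ`. -/
def dualCurve (A : Set (ℝ × ℝ)) : Set (Real.Angle × ℝ) :=
  {q | ∃ x : ℝ, q = ((x : Real.Angle), suppFn A x)}

/-! ### Swap pairs and combinatorial types -/

/-- The adjacent transposition of positions `i` and `i+1` (0-based) in `Fin n`
(the identity if out of range); its paper height is `i+1`. -/
def adjSwap (n i : ℕ) : Equiv.Perm (Fin n) :=
  if h : i + 1 < n then Equiv.swap ⟨i, Nat.lt_of_succ_lt h⟩ ⟨i + 1, h⟩ else 1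

/-- A swap pair on the index set `L`: a bijection `ρ : [n] → L` together with a
swap sequence, i.e. a finite sequence of adjacent transpositions (recorded by
their 0-based heights) whose composite is the identity permutation. -/
structure SwapPair (L : Type*) [Fintype L] where
  ρ : Fin (Fintype.card L) ≃ L
  heights : List ℕ
  heights_lt : ∀ h ∈ heights, h + 1 < Fintype.card L
  prod_eq_one : (heights.map (adjSwap (Fintype.card L))).prod = 1

/-- The elementary operations on swap pairs: a cyclic shift, and an independent
transposition of consecutive swaps whose heights differ by more than one. -/
def ElemMove {L : Type*} [Fintype L] (P Q : SwapPair L) : Prop :=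
  (∃ h rest, P.heights = h :: rest ∧ Q.heights = rest ++ [h] ∧
    Q.ρ = (adjSwap (Fintype.card L) h).trans P.ρ) ∨
  (∃ pre h₁ h₂ post, (h₁ + 1 < h₂ ∨ h₂ + 1 < h₁) ∧
    P.heights = pre ++ h₁ :: h₂ :: post ∧ Q.heights = pre ++ h₂ :: h₁ :: post ∧
    Q.ρ = P.ρ)

/-- Equivalence of swap pairs: generated by the elementary operations. -/
def SwapEquiv {L : Type*} [Fintype L] : SwapPair L → SwapPair L → Prop :=
  Relation.EqvGen ElemMove

def combSetoid (L : Type*) [Fintype L] : Setoid (SwapPair L) :=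
  Relation.EqvGen.setoid ElemMove

/-- A combinatorial type on `L`: an equivalence class of swap pairs. -/
def CombType (L : Type*) [Fintype L] : Type _ := Quotient (combSetoid L)

/-- The combinatorial type of a swap pair. -/
def SwapPair.cls {L : Type*} [Fintype L] (P : SwapPair L) : CombType L :=
  Quotient.mk (combSetoid L) P

/-- `P` is a swap pair obtained by sweeping the system of curves given by the
graphs of `f` once around the cylinder: the crossings are enumerated in
lexicographic order on `(0, 2π] × ℝ`, `ρ` lists the curves from bottom to top
before the first crossing, and the height of the `t`-th swap is one plus the
number of curves below the `t`-th crossing. -/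
def HasSwapPair {L : Type*} [Fintype L] (f : L → ℝ → ℝ) (P : SwapPair L) : Prop :=
  ∃ e : Fin P.heights.length → ℝ × ℝ,
    Function.Injective e ∧ Set.range e = crossings f ∧
    (∀ s t : Fin P.heights.length, s < t → Prod.Lex (· < ·) (· < ·) (e s) (e t)) ∧
    (∀ t : Fin P.heights.length, P.heights.get t = Nat.card {i : L // f i (e t).1 < (e t).2}) ∧
    ∃ θ₀ ∈ Set.Ioc (0 : ℝ) (2 * Real.pi),
      (∀ t : Fin P.heights.length, θ₀ < (e t).1) ∧
      ∀ a b : Fin (Fintype.card L), a < b → f (P.ρ a) θ₀ < f (P.ρ b) θ₀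

/-- `P` is a swap pair of the dual support system of the arrangement `𝒜`. -/
def ArrHasPair {L : Type*} [Fintype L] (𝒜 : Arrangement L) (P : SwapPair L) : Prop :=
  HasSwapPair (fun i => suppFn (𝒜.body i)) P

/-- The combinatorial type of the arrangement `𝒜` is `Ω`. -/
def ArrHasType {L : Type*} [Fintype L] (𝒜 : Arrangement L) (Ω : CombType L) : Prop :=
  ∃ P : SwapPair L, ArrHasPair 𝒜 P ∧ P.cls = Ω

/-- Two arrangements have the same combinatorial type. -/
def SameCombTypeArr {L : Type*} [Fintype L] (𝒜 ℬ : Arrangement L) : Prop :=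
  ∃ P Q : SwapPair L, ArrHasPair 𝒜 P ∧ ArrHasPair ℬ Q ∧ SwapEquiv P Q

/-! ### Restriction, orientability, the order type of an orientable arrangement -/

/-- Restriction (reindexing) of an arrangement along an injection. -/
def Arrangement.restrict {L L' : Type*} [Fintype L] [Fintype L'] (𝒜 : Arrangement L)
    (hne : Nonempty L') (e : L' → L) (he : Function.Injective e) : Arrangement L' where
  nonemptyIdx := hne
  body i := 𝒜.body (e i)
  isCompact i := 𝒜.isCompact (e i)
  convex i := 𝒜.convex (e i)
  nonempty i := 𝒜.nonempty (e i)
  transversal i j hij θ h := 𝒜.transversal (e i) (e j) (fun hh => hij (he hh)) θ h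
  noTriple i j k hij hik hjk θ := 𝒜.noTriple (e i) (e j) (e k)
    (fun hh => hij (he hh)) (fun hh => hik (he hh)) (fun hh => hjk (he hh)) θ
  finTangents := 𝒜.finTangents.subset (by
    rintro p ⟨hp, i, j, hij, h1, h2⟩
    exact ⟨hp, e i, e j, fun hh => hij (he hh), h1, h2⟩)

/-- An arrangement all of whose bodies are single points. -/
def IsPointArr {L : Type*} [Fintype L] (ℬ : Arrangement L) : Prop :=
  ∀ i, ∃ p : ℝ × ℝ, ℬ.body i = {p}

/-- The triple `(i,j,k)` of bodies of `𝒜` is orientable: it has the combinatorial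
type of three generic points. -/
def OrientableTriple {L : Type*} [Fintype L] (𝒜 : Arrangement L) (i j k : L) : Prop :=
  ∃ he : Function.Injective ![i, j, k],
    ∃ ℬ : Arrangement (Fin 3), IsPointArr ℬ ∧
      SameCombTypeArr (𝒜.restrict ⟨0⟩ ![i, j, k] he) ℬ

/-- An orientable arrangement: at least three bodies, every triple orientable. -/
def Orientable {L : Type*} [Fintype L] (𝒜 : Arrangement L) : Prop :=
  3 ≤ Fintype.card L ∧ ∀ i j k : L, i ≠ j → i ≠ k → j ≠ k → OrientableTriple 𝒜 i j k

/-- The support curve of body `a` is strictly on top of those of `b` and `c` at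
angle `θ`; equivalently `a` is the unique body of the triple touching the
boundary of the convex hull of the union at outward normal direction `θ`. -/
def TopAmong {L : Type*} [Fintype L] (𝒜 : Arrangement L) (a b c : L) (θ : ℝ) : Prop :=
  suppFn (𝒜.body b) θ < suppFn (𝒜.body a) θ ∧ suppFn (𝒜.body c) θ < suppFn (𝒜.body a) θ

/-- The ordered triple of bodies `(i,j,k)` is positively (counter-clockwise)
oriented: the three bodies appear in the order `i, j, k` on the boundary of the
convex hull of their union, i.e. their support curves reach the upper envelope
in this cyclic order. -/
def TripleOrientPos {L : Type*} [Fintype L] (𝒜 : Arrangement L) (i j k : L) : Prop :=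
  ∃ θ₁ θ₂ θ₃ : ℝ, θ₁ < θ₂ ∧ θ₂ < θ₃ ∧ θ₃ < θ₁ + 2 * Real.pi ∧
    TopAmong 𝒜 i j k θ₁ ∧ TopAmong 𝒜 j k i θ₂ ∧ TopAmong 𝒜 k i j θ₃

/-- The sign function recording the orientations of the triples of an
arrangement (zero on degenerate triples). -/
def arrChirotope {L : Type*} [Fintype L] (𝒜 : Arrangement L) : L → L → L → SignType :=
  fun i j k =>
    if i = j ∨ i = k ∨ j = k then 0 else if TripleOrientPos 𝒜 i j k then 1 else -1

/-! ### k-gons -/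

/-- A `k`-gon: the convex hull of at most `k` points. -/
def IsKgon (A : Set (ℝ × ℝ)) (k : ℕ) : Prop :=
  ∃ S : Finset (ℝ × ℝ), S.card ≤ k ∧ A = convexHull ℝ (S : Set (ℝ × ℝ))

/-! ### Projective transformations and realization spaces -/

/-- Denominator (third homogeneous coordinate) of the projective transformation
with matrix `M` at the point `p`. -/
def projDen (M : Matrix (Fin 3) (Fin 3) ℝ) (p : ℝ × ℝ) : ℝ :=
  M 2 0 * p.1 + M 2 1 * p.2 + M 2 2

/-- The projective transformation of the plane with homogeneous matrix `M`. -/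
def projAct (M : Matrix (Fin 3) (Fin 3) ℝ) (p : ℝ × ℝ) : ℝ × ℝ :=
  ((M 0 0 * p.1 + M 0 1 * p.2 + M 0 2) / projDen M p,
   (M 1 0 * p.1 + M 1 1 * p.2 + M 1 2) / projDen M p)

/-- The projective transformation with matrix `M` is admissible on `S`: it is
invertible, bounded, and orientation preserving on the convex hull of `S`
(positive Jacobian determinant `det M / (den p)³`). -/
def AdmissibleOn (M : Matrix (Fin 3) (Fin 3) ℝ) (S : Set (ℝ × ℝ)) : Prop :=
  IsUnit M.det ∧ ∀ p ∈ convexHull ℝ S, projDen M p ≠ 0 ∧ 0 < M.det / (projDen M p) ^ 3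

/-- Projective equivalence of arrangements, via an admissible projectivity. -/
def ProjEquivArr {L : Type*} [Fintype L] (𝒜 ℬ : Arrangement L) : Prop :=
  ∃ M : Matrix (Fin 3) (Fin 3) ℝ, AdmissibleOn M (⋃ i, 𝒜.body i) ∧
    ∀ i, projAct M '' 𝒜.body i = ℬ.body i

/-- The space of arrangements, metrized by the maximum over the index set of the
Hausdorff distances between corresponding bodies. -/
instance arrPseudoMetric (L : Type*) [Fintype L] : PseudoMetricSpace (Arrangement L) :=
  PseudoMetricSpace.induced
    (fun 𝒜 (i : L) => (⟨⟨𝒜.body i, 𝒜.isCompact i⟩, 𝒜.nonempty i⟩ :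
      TopologicalSpace.NonemptyCompacts (ℝ × ℝ)))
    inferInstance

/-- The full realization space of a combinatorial type. -/
abbrev RealizationSpace {L : Type*} [Fintype L] (Ω : CombType L) : Type _ :=
  {𝒜 : Arrangement L // ArrHasType 𝒜 Ω}

/-- The (projective) realization space: the full realization space modulo
admissible projectivities. -/
abbrev ProjRealizationSpace {L : Type*} [Fintype L] (Ω : CombType L) : Type _ :=
  Quot (fun A B : RealizationSpace Ω => ProjEquivArr A.1 B.1)

/-- The full `k`-gon realization space of a combinatorial type. -/
abbrev KgonRealizationSpace {L : Type*} [Fintype L] (k : ℕ) (Ω : CombType L) : Type _ :=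
  {𝒜 : Arrangement L // ArrHasType 𝒜 Ω ∧ ∀ i, IsKgon (𝒜.body i) k}

/-- The (projective) `k`-gon realization space. -/
abbrev ProjKgonRealizationSpace {L : Type*} [Fintype L] (k : ℕ) (Ω : CombType L) : Type _ :=
  Quot (fun A B : KgonRealizationSpace k Ω => ProjEquivArr A.1 B.1)

/-! ### Incidence sequences, layers, depth -/

/-- The order of the curves (bottom to top) after the first `t` swaps. -/
def ordAt {L : Type*} [Fintype L] (P : SwapPair L) (t : ℕ) : Fin (Fintype.card L) → L :=
  fun p => P.ρ (((P.heights.take t).map (adjSwap (Fintype.card L))).prod p)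

theorem heights_get_lt {L : Type*} [Fintype L] (P : SwapPair L)
    (t : Fin P.heights.length) : P.heights.get t + 1 < Fintype.card L :=
  P.heights_lt _ (List.get_mem _ _)

/-- First entry of the `t`-th label of the incidence sequence: the curve coming
from above (crossing downward) at the `t`-th crossing. -/
def incFst {L : Type*} [Fintype L] (P : SwapPair L) (t : Fin P.heights.length) : L :=
  ordAt P t.1 ⟨P.heights.get t + 1, heights_get_lt P t⟩

/-- Second entry of the `t`-th label of the incidence sequence: the curve coming
from below (crossing upward) at the `t`-th crossing. -/
def incSnd {L : Type*} [Fintype L] (P : SwapPair L) (t : Fin P.heights.length) : L :=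
  ordAt P t.1 ⟨P.heights.get t, Nat.lt_of_succ_lt (heights_get_lt P t)⟩

/-- The ordered pair `(i,j)` occurs in the incidence sequence of `P`. -/
def IncidentPair {L : Type*} [Fintype L] (P : SwapPair L) (i j : L) : Prop :=
  ∃ t : Fin P.heights.length, incFst P t = i ∧ incSnd P t = j

def Touches {L : Type*} [Fintype L] (P : SwapPair L) (i j : L) : Prop :=
  IncidentPair P i j ∨ IncidentPair P j i

/-- `i` is a non-isolated vertex of the incidence graph. -/
def IsActive {L : Type*} [Fintype L] (P : SwapPair L) (i : L) : Prop :=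
  ∃ j, Touches P i j

/-- Connectivity in the incidence graph (whose components are the layers). -/
def Linked {L : Type*} [Fintype L] (P : SwapPair L) : L → L → Prop :=
  Relation.ReflTransGen (Touches P)

/-- The depth: the number of layers (connected components of the incidence
graph, excluding isolated vertices).  Depth 1 is called non-layered. -/
def Depth {L : Type*} [Fintype L] (P : SwapPair L) : ℕ :=
  Nat.card (Quot fun i j : {i : L // IsActive P i} => Linked P i.1 j.1)

/-! ### Local sequences, tableaux, periods, bumps -/

/-- A tableau on `L`: an ordering of `L` (rows, bottom to top) together with a
list of indices in each row. -/
structure Tableau (L : Type*) [Fintype L] where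
  ρ : Fin (Fintype.card L) ≃ L
  row : L → List L

/-- The local sequence of the index `i`: the indices met by curve `i`, in
sweep order. -/
def localSeq {L : Type*} [Fintype L] (P : SwapPair L) (i : L) : List L :=
  (List.finRange P.heights.length).filterMap fun t =>
    if incFst P t = i then some (incSnd P t)
    else if incSnd P t = i then some (incFst P t) else none

/-- The associated tableau of a swap pair: rows are the local sequences, ordered
by `ρ`. -/
def assocTableau {L : Type*} [Fintype L] (P : SwapPair L) : Tableau L :=
  ⟨P.ρ, localSeq P⟩

/-- `Λ'` is a `p`-th root of `Λ`: `Λ` is the `p`-fold row-wise concatenation of `Λ'`. -/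
def IsPeriodOf {L : Type*} [Fintype L] (Λ' Λ : Tableau L) (p : ℕ) : Prop :=
  Λ'.ρ = Λ.ρ ∧ ∀ i, Λ.row i = (List.replicate p (Λ'.row i)).flatten

/-- The periodicity of a tableau: the largest `p` such that `Λ` is a `p`-fold
concatenation; the corresponding `Λ'` is called the period of `Λ`. -/
def Periodicity {L : Type*} [Fintype L] (Λ : Tableau L) : ℕ :=
  sSup {p : ℕ | ∃ Λ', IsPeriodOf Λ' Λ p}

/-- Bumping the adjacent pair `{j,k}` in the tableau `Λ` produces `Λ'`: the rows
of `j` and `k` begin with each other; these first entries are moved to the ends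
of their rows, and rows `j`, `k` exchange their positions in the row order. -/
def Bump {L : Type*} [Fintype L] (Λ Λ' : Tableau L) (j k : L) : Prop :=
  j ≠ k ∧
  (∃ r, Λ.row j = k :: r ∧ Λ'.row j = r ++ [k]) ∧
  (∃ r, Λ.row k = j :: r ∧ Λ'.row k = r ++ [j]) ∧
  (∀ i, i ≠ j → i ≠ k → Λ'.row i = Λ.row i) ∧
  Λ'.ρ = Λ.ρ.trans (Equiv.swap j k)

def BumpStep {L : Type*} [Fintype L] (Λ Λ' : Tableau L) : Prop :=
  ∃ j k, Bump Λ Λ' j k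

/-! ### Support configurations -/

/-- The pair of bodies `(i,j)` has a common supporting tangent with outward
normal angle `θ` meeting `i` before `j`: dually, the support curve of `i`
crosses that of `j` downward at `θ`. -/
def DownCrossAt {L : Type*} [Fintype L] (𝒜 : Arrangement L) (i j : L) (θ : ℝ) : Prop :=
  i ≠ j ∧ suppFn (𝒜.body i) θ = suppFn (𝒜.body j) θ ∧
  ∃ ε > 0, (∀ s ∈ Set.Ioo (θ - ε) θ, suppFn (𝒜.body j) s < suppFn (𝒜.body i) s) ∧
    ∀ t ∈ Set.Ioo θ (θ + ε), suppFn (𝒜.body i) t < suppFn (𝒜.body j) t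

/-- Carrier for labeled vector configurations: to each ordered pair of indices,
a closed set of directions (a finite set of unit vectors, in practice). -/
abbrev ConfigCarrier (L : Type*) : Type _ :=
  L × L → TopologicalSpace.Closeds Real.Angle

/-- The support configuration of an arrangement: `(i,j)` is labeled with the set
of outward normal directions of common supporting tangents meeting `i` first. -/
def suppConfig {L : Type*} [Fintype L] (𝒜 : Arrangement L) : ConfigCarrier L :=
  fun ij =>
    ⟨closure {a : Real.Angle | ∃ x : ℝ, a = (x : Real.Angle) ∧ DownCrossAt 𝒜 ij.1 ij.2 x},
      isClosed_closure⟩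

/-- The support configuration space `𝒱(Ω)` of a combinatorial type: labeled
configurations of directions obtained from the incidence sequence of a swap pair
representing `Ω` together with weakly increasing angles in `(0, 2π]`, where
consecutive angles may coincide only if the corresponding heights differ by
more than one. -/
def VSpace {L : Type*} [Fintype L] (Ω : CombType L) : Set (ConfigCarrier L) :=
  {X | ∃ P : SwapPair L, P.cls = Ω ∧ ∃ θ : Fin P.heights.length → ℝ,
    (∀ t, θ t ∈ Set.Ioc 0 (2 * Real.pi)) ∧
    (∀ s t : Fin P.heights.length, s ≤ t → θ s ≤ θ t) ∧
    (∀ s t : Fin P.heights.length, s.1 + 1 = t.1 → θ s = θ t →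
      P.heights.get s + 1 < P.heights.get t ∨ P.heights.get t + 1 < P.heights.get s) ∧
    ∀ i j : L, X (i, j) =
      ⟨closure {a : Real.Angle |
          ∃ t : Fin P.heights.length, incFst P t = i ∧ incSnd P t = j ∧ a = (θ t : Real.Angle)},
        isClosed_closure⟩}

/-- Rotation of the plane by angle `α` (the `SO(2)` action on bodies). -/
def rotPt (α : ℝ) (p : ℝ × ℝ) : ℝ × ℝ :=
  (p.1 * Real.cos α - p.2 * Real.sin α, p.1 * Real.sin α + p.2 * Real.cos α)

/-- The `SO(2)` action on configurations of directions: rotate every label. -/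
def rotConfig {L : Type*} (α : ℝ) (X : ConfigCarrier L) : ConfigCarrier L :=
  fun ij =>
    ⟨closure ((fun a : Real.Angle => a + (α : Real.Angle)) '' (X ij : Set Real.Angle)),
      isClosed_closure⟩

end RealBody

/-! The period is unique because `r ↦ (replicate p r).flatten` is injective for `p ≠ 0`.
For the invariance, the local sequence of `i` is the incidence sequence filtered by
`partner i`. A cyclic shift rotates the incidence sequence, and an independent transposition
exchanges two incidences of disjoint pairs of curves, which no local sequence can see. So each
row of the tableau is only rotated, and a rotation of a `p`-fold concatenation of `r` is the
`p`-fold concatenation of a rotation of `r`: the set of `p` for which the tableau has a `p`-th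
root, hence its periodicity, does not change. -/

namespace List

variable {α : Type*}

theorem flatten_replicate_append_append (p : ℕ) (u v : List α) :
    (replicate p (u ++ v)).flatten ++ u = u ++ (replicate p (v ++ u)).flatten := by
  induction p with
  | zero => simp
  | succ p ih => simp only [replicate_succ, flatten_cons, append_assoc, ih]

theorem rotate_flatten_replicate (p k : ℕ) (r : List α) :
    (replicate p r).flatten.rotate k = (replicate p (r.rotate k)).flatten := by
  induction k with
  | zero => simp
  | succ k ih =>
    rw [← rotate_rotate, ih, ← rotate_rotate r k 1]
    rcases r.rotate k with _ | ⟨a, s⟩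
    · simp
    rcases p with _ | p
    · simp
    have hrot := flatten_replicate_append_append p [a] s
    simp only [singleton_append] at hrot
    rw [replicate_succ, flatten_cons, cons_append, rotate_cons_succ, rotate_zero, append_assoc,
      hrot, replicate_succ, flatten_cons]
    simp

theorem IsRotated.exists_flatten_replicate {l l' : List α} (h : l ~r l') {p : ℕ}
    (hl : ∃ r, l = (replicate p r).flatten) : ∃ r, l' = (replicate p r).flatten := by
  obtain ⟨k, rfl⟩ := h
  obtain ⟨r, rfl⟩ := hl
  exact ⟨r.rotate k, rotate_flatten_replicate p k r⟩

theorem flatten_replicate_inj {p : ℕ} (hp : p ≠ 0) {a b : List α}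
    (h : (replicate p a).flatten = (replicate p b).flatten) : a = b := by
  have hlen : a.length = b.length := by
    have := congrArg length h
    simp only [length_flatten, map_replicate, sum_replicate, smul_eq_mul] at this
    exact Nat.eq_of_mul_eq_mul_left (Nat.pos_of_ne_zero hp) this
  obtain ⟨q, rfl⟩ := Nat.exists_eq_succ_of_ne_zero hp
  rw [replicate_succ, replicate_succ, flatten_cons, flatten_cons] at h
  exact (append_inj h hlen).1

theorem filterMap_append_comm {β : Type*} {f : α → Option β} {l₁ l₂ : List α}
    (h : ∀ a ∈ l₁, ∀ b ∈ l₂, f a = none ∨ f b = none) :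
    (l₁ ++ l₂).filterMap f = (l₂ ++ l₁).filterMap f := by
  rw [filterMap_append, filterMap_append]
  by_cases h₁ : l₁.filterMap f = []
  · simp [h₁]
  obtain ⟨a, ha, hfa⟩ : ∃ a ∈ l₁, f a ≠ none := by
    simpa [filterMap_eq_nil_iff] using h₁
  have h₂ : l₂.filterMap f = [] :=
    filterMap_eq_nil_iff.2 fun b hb => (h a ha b hb).resolve_left hfa
  simp [h₂]

end List

namespace RealBody

open List

section Periods

variable {L : Type*} [Fintype L] {Λ Λ' Λ₁ Λ₂ : Tableau L} {p : ℕ}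

theorem exists_isPeriodOf_iff :
    (∃ Λ', IsPeriodOf Λ' Λ p) ↔ ∀ i, ∃ r, Λ.row i = (replicate p r).flatten := by
  refine ⟨fun ⟨_, _, h⟩ i => ⟨_, h i⟩, fun h => ?_⟩
  choose r hr using h
  exact ⟨⟨Λ.ρ, r⟩, rfl, hr⟩

theorem periodicity_eq_of_isRotated (h : ∀ i, Λ.row i ~r Λ'.row i) :
    Periodicity Λ = Periodicity Λ' := by
  unfold Periodicity
  congr 1
  ext p
  simp only [Set.mem_ofPred_eq, exists_isPeriodOf_iff]
  exact forall_congr' fun i =>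
    ⟨(h i).exists_flatten_replicate, (h i).symm.exists_flatten_replicate⟩

theorem IsPeriodOf.ne_zero (h : IsPeriodOf Λ' Λ p) {i : L} (hi : Λ.row i ≠ []) : p ≠ 0 := by
  rintro rfl
  exact hi (h.2 i)

theorem IsPeriodOf.unique (hp : p ≠ 0) (h₁ : IsPeriodOf Λ₁ Λ p) (h₂ : IsPeriodOf Λ₂ Λ p) :
    Λ₁ = Λ₂ := by
  obtain ⟨ρ₁, row₁⟩ := Λ₁
  obtain ⟨ρ₂, row₂⟩ := Λ₂
  obtain rfl : ρ₁ = ρ₂ := h₁.1.trans h₂.1.symm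
  congr
  exact funext fun i => flatten_replicate_inj hp ((h₁.2 i).symm.trans (h₂.2 i))

end Periods

section Incidences

variable {L : Type*} {n : ℕ}

theorem adjSwap_apply_of_ne {h : ℕ} {p : Fin n} (h₁ : (p : ℕ) ≠ h) (h₂ : (p : ℕ) ≠ h + 1) :
    adjSwap n h p = p := by
  unfold adjSwap
  split
  · exact Equiv.swap_apply_of_ne_of_ne (fun e => h₁ (congrArg Fin.val e))
      (fun e => h₂ (congrArg Fin.val e))
  · rfl

theorem adjSwap_commute {h₁ h₂ : ℕ} (hsep : h₁ + 1 < h₂ ∨ h₂ + 1 < h₁) :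
    Commute (adjSwap n h₁) (adjSwap n h₂) :=
  Equiv.Perm.Disjoint.commute fun p => by
    by_cases hp : (p : ℕ) = h₁ ∨ (p : ℕ) = h₁ + 1
    · exact .inr (adjSwap_apply_of_ne (by omega) (by omega))
    · exact .inl (adjSwap_apply_of_ne (by omega) (by omega))

/-- The incidence of a swap at height `h` of curves in the order `ρ`; empty if `h` is out of
range. -/
def swapAt (ρ : Fin n ≃ L) (h : ℕ) : List (L × L) :=
  if hh : h + 1 < n then [(ρ ⟨h + 1, hh⟩, ρ ⟨h, by omega⟩)] else []

/-- The incidence sequence of the swap sequence `l` started from the order `ρ`. -/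
def incidences : (Fin n ≃ L) → List ℕ → List (L × L)
  | _, [] => []
  | ρ, h :: hs => swapAt ρ h ++ incidences ((adjSwap n h).trans ρ) hs

theorem val_symm_of_mem_swapAt {ρ : Fin n ≃ L} {h : ℕ} {e : L × L} (he : e ∈ swapAt ρ h) :
    (ρ.symm e.1 : ℕ) = h + 1 ∧ (ρ.symm e.2 : ℕ) = h := by
  unfold swapAt at he
  split_ifs at he
  · obtain rfl := List.mem_singleton.1 he
    simp
  · simp at he

theorem swapAt_adjSwap_trans {ρ : Fin n ≃ L} {h₁ h₂ : ℕ} (hsep : h₁ + 1 < h₂ ∨ h₂ + 1 < h₁) :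
    swapAt ((adjSwap n h₁).trans ρ) h₂ = swapAt ρ h₂ := by
  unfold swapAt
  split_ifs
  · rw [Equiv.trans_apply, Equiv.trans_apply, adjSwap_apply_of_ne, adjSwap_apply_of_ne] <;>
      simp only [ne_eq] <;> omega
  · rfl

theorem incidences_append (ρ : Fin n ≃ L) (l₁ l₂ : List ℕ) :
    incidences ρ (l₁ ++ l₂) =
      incidences ρ l₁ ++ incidences (((l₁.map (adjSwap n)).prod).trans ρ) l₂ := by
  induction l₁ generalizing ρ with
  | nil => simp [incidences, Equiv.Perm.one_def]
  | cons h hs ih =>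
    simp only [cons_append, incidences, ih, map_cons, prod_cons, Equiv.Perm.mul_def,
      Equiv.trans_assoc, append_assoc]

theorem incidences_eq_flatMap (ρ : Fin n ≃ L) (l : List ℕ) :
    incidences ρ l = (finRange l.length).flatMap fun t : Fin l.length =>
      swapAt ((((l.take t).map (adjSwap n)).prod).trans ρ) l[t] := by
  induction l generalizing ρ with
  | nil => rfl
  | cons h hs ih =>
    simp only [incidences, ih, length_cons, finRange_succ, flatMap_cons, flatMap_map]
    simp [Equiv.Perm.one_def, Equiv.Perm.mul_def, Equiv.trans_assoc]

def partner (i : L) (e : L × L) : Option L :=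
  if e.1 = i then some e.2 else if e.2 = i then some e.1 else none

theorem partner_eq_none {i : L} {e : L × L} (h₁ : e.1 ≠ i) (h₂ : e.2 ≠ i) :
    partner i e = none := by
  simp [partner, h₁, h₂]

theorem partner_swapAt_eq_none {ρ : Fin n ≃ L} {h₁ h₂ : ℕ} (hsep : h₁ + 1 < h₂ ∨ h₂ + 1 < h₁)
    (i : L) {a b : L × L} (ha : a ∈ swapAt ρ h₁) (hb : b ∈ swapAt ρ h₂) :
    partner i a = none ∨ partner i b = none := by
  obtain ⟨ha₁, ha₂⟩ := val_symm_of_mem_swapAt ha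
  obtain ⟨hb₁, hb₂⟩ := val_symm_of_mem_swapAt hb
  by_cases hi : (ρ.symm i : ℕ) = h₁ ∨ (ρ.symm i : ℕ) = h₁ + 1
  · right
    exact partner_eq_none (by rintro rfl; omega) (by rintro rfl; omega)
  · left
    exact partner_eq_none (by rintro rfl; omega) (by rintro rfl; omega)

theorem filterMap_partner_incidences_swap {h₁ h₂ : ℕ} (hsep : h₁ + 1 < h₂ ∨ h₂ + 1 < h₁)
    (ρ : Fin n ≃ L) (post : List ℕ) (i : L) :
    (incidences ρ (h₁ :: h₂ :: post)).filterMap (partner i) =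
      (incidences ρ (h₂ :: h₁ :: post)).filterMap (partner i) := by
  have hcomm : (adjSwap n h₂).trans ((adjSwap n h₁).trans ρ) =
      (adjSwap n h₁).trans ((adjSwap n h₂).trans ρ) := by
    rw [← Equiv.trans_assoc, ← Equiv.trans_assoc, ← Equiv.Perm.mul_def, ← Equiv.Perm.mul_def,
      (adjSwap_commute hsep).eq]
  simp only [incidences, swapAt_adjSwap_trans hsep, swapAt_adjSwap_trans hsep.symm, hcomm,
    ← append_assoc]
  rw [filterMap_append (l := swapAt ρ h₁ ++ swapAt ρ h₂),
    filterMap_append (l := swapAt ρ h₂ ++ swapAt ρ h₁),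
    filterMap_append_comm fun a ha b hb => partner_swapAt_eq_none hsep i ha hb]

theorem incidences_rotate {ρ : Fin n ≃ L} {h : ℕ} {rest : List ℕ}
    (hprod : ((h :: rest).map (adjSwap n)).prod = 1) :
    incidences ((adjSwap n h).trans ρ) (rest ++ [h]) =
      incidences ((adjSwap n h).trans ρ) rest ++ swapAt ρ h := by
  rw [incidences_append]
  rw [map_cons, prod_cons, Equiv.Perm.mul_def] at hprod
  simp [incidences, ← Equiv.trans_assoc, hprod, Equiv.Perm.one_def]

end Incidences

section SwapPairs

variable {L : Type*} [Fintype L]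

theorem localSeq_eq_filterMap_incidences (P : SwapPair L) (i : L) :
    localSeq P i = (incidences P.ρ P.heights).filterMap (partner i) := by
  have hswap (t : Fin P.heights.length) :
      swapAt ((((P.heights.take t).map (adjSwap _)).prod).trans P.ρ) P.heights[t] =
        [(incFst P t, incSnd P t)] :=
    dif_pos (heights_get_lt P t)
  simp only [incidences_eq_flatMap, hswap, ← map_eq_flatMap, filterMap_map]
  rfl

theorem ElemMove.localSeq_isRotated {P Q : SwapPair L} (hm : ElemMove P Q) (i : L) :
    localSeq P i ~r localSeq Q i := by
  rw [localSeq_eq_filterMap_incidences, localSeq_eq_filterMap_incidences]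
  rcases hm with ⟨h, rest, hP, hQ, hρ⟩ | ⟨pre, h₁, h₂, post, hsep, hP, hQ, hρ⟩
  · have hprod := P.prod_eq_one
    rw [hP] at hprod
    rw [hP, hQ, hρ, incidences, incidences_rotate hprod, filterMap_append, filterMap_append]
    exact isRotated_append
  · rw [hP, hQ, hρ, incidences_append, incidences_append, filterMap_append, filterMap_append,
      filterMap_partner_incidences_swap hsep]

theorem ElemMove.periodicity_eq {P Q : SwapPair L} (hm : ElemMove P Q) :
    Periodicity (assocTableau P) = Periodicity (assocTableau Q) :=
  periodicity_eq_of_isRotated hm.localSeq_isRotated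

end SwapPairs

end RealBody

/-- Lemma 8 of the paper.  The period of a tableau (with
some nonempty row) is unique, and any two tableaux representing the same
combinatorial type have the same periodicity. -/
theorem statement14 {L : Type*} [Fintype L] :
    (∀ Λ Λ₁ Λ₂ : RealBody.Tableau L, (∃ i, Λ.row i ≠ []) →
      RealBody.IsPeriodOf Λ₁ Λ (RealBody.Periodicity Λ) →
      RealBody.IsPeriodOf Λ₂ Λ (RealBody.Periodicity Λ) → Λ₁ = Λ₂) ∧
    (∀ P Q : RealBody.SwapPair L, RealBody.SwapEquiv P Q →
      RealBody.Periodicity (RealBody.assocTableau P) =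
        RealBody.Periodicity (RealBody.assocTableau Q)) := by
  refine ⟨fun Λ Λ₁ Λ₂ ⟨i, hi⟩ h₁ h₂ => h₁.unique (h₁.ne_zero hi) h₂, fun P Q hPQ => ?_⟩
  let samePeriodicity : Setoid (RealBody.SwapPair L) :=
    Setoid.ker fun P => RealBody.Periodicity (RealBody.assocTableau P)
  exact (Equivalence.eqvGen_iff samePeriodicity.iseqv).1
    (Relation.EqvGen.mono (fun _ _ hm => hm.periodicity_eq) P Q hPQ)
end
end

section
/- If h : S¹ → ℝ is C²-smooth and h(θ) + h''(θ) > 0 for all θ ∈ S¹, then h is the support function of a compact convex body A in the plane ℝ²; that is, there exists a compact convex set A ⊂ ℝ² with max_{p∈A} ⟨θ,p⟩ = h(θ) for all θ ∈ S¹, and A is bounded by a curve whose curvature at the boundary point with outward unit normal θ equals 1/(h(θ)+h''(θ)). -/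
/- Common framework: arrangements of convex bodies in the plane, dual support
systems on the cylinder, swap pairs and combinatorial types, following
Dobbins–Holmsen–Hubard, "Realization spaces of arrangements of convex bodies". -/

open scoped Classical

noncomputable section

/-! The body is the Wulff shape `A = {p | ∀ φ, ⟨p, u φ⟩ ≤ h φ}`, `u φ = (cos φ, sin φ)`. For each
`θ`, the point `γ θ = h θ • u θ + h' θ • u' θ` satisfies `⟨γ θ, u θ⟩ = h θ`, and the slack
`G = h - ⟨γ θ, u ·⟩` has `G θ = G' θ = 0` and `G + G'' = h + h'' ≥ 0`. Comparing `G` with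
`sin (φ - ·)` (the Wronskian `G' sin (φ - ·) + G cos (φ - ·)` is monotone between `θ` and `φ`)
gives `G φ ≥ 0` for `|φ - θ| ≤ π`, hence for all `φ` by periodicity: `γ θ ∈ A`, so `h` is the
support function of `A`. Conversely, a boundary point `p` of `A` lies on some line
`⟨·, u θ⟩ = h θ`: the slack `h - ⟨p, u ·⟩` is periodic, so it attains its minimum, and were that
positive a ball around `p` would lie in `A`. Then `θ` minimizes the slack, and its vanishing
derivative forces `p = γ θ`. -/

open Real Set Filter Topology

theorem nonneg_of_add_deriv_deriv_nonneg {G G' G'' : ℝ → ℝ}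
    (hG : ∀ x, HasDerivAt G (G' x) x) (hG' : ∀ x, HasDerivAt G' (G'' x) x)
    (hpos : ∀ x, 0 ≤ G x + G'' x) {θ φ : ℝ} (h₀ : G θ = 0) (h₁ : G' θ = 0)
    (hφ : |φ - θ| ≤ π) : 0 ≤ G φ := by
  set W : ℝ → ℝ := fun x => G' x * sin (φ - x) + G x * cos (φ - x)
  have hW : ∀ x, HasDerivAt W ((G x + G'' x) * sin (φ - x)) x := fun x => by
    have hs : HasDerivAt (fun x => sin (φ - x)) (-cos (φ - x)) x := by
      simpa using ((hasDerivAt_id x).const_sub φ).sin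
    have hc : HasDerivAt (fun x => cos (φ - x)) (sin (φ - x)) x := by
      simpa using ((hasDerivAt_id x).const_sub φ).cos
    exact (((hG' x).mul hs).add ((hG x).mul hc)).congr_deriv (by ring)
  have hWc : Continuous W := continuous_iff_continuousAt.2 fun x => (hW x).continuousAt
  have hWθ : W θ = 0 := by simp [W, h₀, h₁]
  have hWφ : W φ = G φ := by simp [W]
  rw [← hWφ, ← hWθ]
  rcases le_total θ φ with hle | hle
  · refine monotoneOn_of_hasDerivWithinAt_nonneg (convex_Icc θ φ) hWc.continuousOn
      (fun x _ => (hW x).hasDerivWithinAt) (fun x hx => ?_) (left_mem_Icc.2 hle)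
      (right_mem_Icc.2 hle) hle
    rw [interior_Icc] at hx
    have := abs_le.1 hφ
    exact mul_nonneg (hpos x)
      (sin_nonneg_of_nonneg_of_le_pi (by linarith [hx.2]) (by linarith [hx.1]))
  · refine antitoneOn_of_hasDerivWithinAt_nonpos (convex_Icc φ θ) hWc.continuousOn
      (fun x _ => (hW x).hasDerivWithinAt) (fun x hx => ?_) (left_mem_Icc.2 hle)
      (right_mem_Icc.2 hle) hle
    rw [interior_Icc] at hx
    have := abs_le.1 hφ
    exact mul_nonpos_of_nonneg_of_nonpos (hpos x)
      (sin_nonpos_of_nonpos_of_neg_pi_le (by linarith [hx.1]) (by linarith [hx.2]))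

namespace RealBody

def dotDir (p : ℝ × ℝ) (φ : ℝ) : ℝ := p.1 * cos φ + p.2 * sin φ

theorem hasDerivAt_dotDir (p : ℝ × ℝ) (φ : ℝ) :
    HasDerivAt (dotDir p) (dotDir (p.2, -p.1) φ) φ :=
  (((hasDerivAt_cos φ).const_mul p.1).add ((hasDerivAt_sin φ).const_mul p.2)).congr_deriv
    (by simp only [dotDir]; ring)

theorem continuous_dotDir (p : ℝ × ℝ) : Continuous (dotDir p) := by
  unfold dotDir; fun_prop

theorem periodic_dotDir (p : ℝ × ℝ) : Function.Periodic (dotDir p) (2 * π) := by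
  intro φ; simp [dotDir]

theorem dotDir_add_smul (p : ℝ × ℝ) (t θ : ℝ) :
    dotDir (p + t • (cos θ, sin θ)) θ = dotDir p θ + t := by
  simp only [dotDir, Prod.fst_add, Prod.snd_add, Prod.smul_mk, smul_eq_mul]
  linear_combination t * sin_sq_add_cos_sq θ

theorem dotDir_sub_le (p q : ℝ × ℝ) (φ : ℝ) :
    dotDir q φ - dotDir p φ ≤ 2 * dist q p := by
  have h₁ : (q.1 - p.1) * cos φ ≤ |q.1 - p.1| := (le_abs_self _).trans <| by
    rw [abs_mul]; exact mul_le_of_le_one_right (abs_nonneg _) (abs_cos_le_one φ)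
  have h₂ : (q.2 - p.2) * sin φ ≤ |q.2 - p.2| := (le_abs_self _).trans <| by
    rw [abs_mul]; exact mul_le_of_le_one_right (abs_nonneg _) (abs_sin_le_one φ)
  rw [Prod.dist_eq, Real.dist_eq, Real.dist_eq]
  simp only [dotDir]
  linarith [le_max_left |q.1 - p.1| |q.2 - p.2|, le_max_right |q.1 - p.1| |q.2 - p.2|]

theorem ext_dotDir {p q : ℝ × ℝ} (θ : ℝ) (h₁ : dotDir p θ = dotDir q θ)
    (h₂ : dotDir (p.2, -p.1) θ = dotDir (q.2, -q.1) θ) : p = q := by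
  simp only [dotDir] at h₁ h₂
  ext
  · linear_combination cos θ * h₁ - sin θ * h₂ - (p.1 - q.1) * sin_sq_add_cos_sq θ
  · linear_combination sin θ * h₁ + cos θ * h₂ - (p.2 - q.2) * sin_sq_add_cos_sq θ

def wulffShape (h : ℝ → ℝ) : Set (ℝ × ℝ) := {p | ∀ φ, dotDir p φ ≤ h φ}

theorem isClosed_wulffShape (h : ℝ → ℝ) : IsClosed (wulffShape h) := by
  simp only [wulffShape, ofPred_forall]
  exact isClosed_iInter fun φ => isClosed_le (by unfold dotDir; fun_prop) continuous_const

theorem convex_wulffShape (h : ℝ → ℝ) : Convex ℝ (wulffShape h) := by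
  intro p hp q hq a b ha hb hab φ
  have e : dotDir (a • p + b • q) φ = a * dotDir p φ + b * dotDir q φ := by
    simp only [dotDir, Prod.fst_add, Prod.snd_add, Prod.smul_fst, Prod.smul_snd, smul_eq_mul]
    ring
  have hφ : h φ = a * h φ + b * h φ := by rw [← add_mul, hab, one_mul]
  rw [e, hφ]
  exact add_le_add (mul_le_mul_of_nonneg_left (hp φ) ha) (mul_le_mul_of_nonneg_left (hq φ) hb)

theorem wulffShape_subset_Icc (h : ℝ → ℝ) :
    wulffShape h ⊆ Icc (-h π, -h (-(π / 2))) (h 0, h (π / 2)) := by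
  intro p hp
  have h₀ := hp 0
  have h₁ := hp π
  have h₂ := hp (π / 2)
  have h₃ := hp (-(π / 2))
  simp only [dotDir, cos_zero, sin_zero, cos_pi, sin_pi, cos_pi_div_two, sin_pi_div_two,
    cos_neg, sin_neg] at h₀ h₁ h₂ h₃
  refine ⟨⟨?_, ?_⟩, ?_, ?_⟩ <;> dsimp only <;> linarith

theorem isCompact_wulffShape (h : ℝ → ℝ) : IsCompact (wulffShape h) :=
  isCompact_Icc.of_isClosed_subset (isClosed_wulffShape h) (wulffShape_subset_Icc h)

variable {h : ℝ → ℝ}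

theorem suppFn_wulffShape {p : ℝ × ℝ} {θ : ℝ} (hp : p ∈ wulffShape h)
    (hpθ : dotDir p θ = h θ) : suppFn (wulffShape h) θ = h θ :=
  IsGreatest.csSup_eq ⟨⟨p, hp, hpθ⟩, by rintro _ ⟨q, hq, rfl⟩; exact hq θ⟩

theorem notMem_interior_wulffShape {p : ℝ × ℝ} {θ : ℝ} (hpθ : dotDir p θ = h θ) :
    p ∉ interior (wulffShape h) := by
  intro hp
  have hcont : Tendsto (fun t : ℝ => p + t • (cos θ, sin θ)) (𝓝[>] 0) (𝓝 p) :=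
    (Continuous.tendsto' (by fun_prop) 0 p (by simp)).mono_left nhdsWithin_le_nhds
  obtain ⟨t, hmem, ht⟩ :=
    ((hcont.eventually (mem_interior_iff_mem_nhds.1 hp)).and self_mem_nhdsWithin).exists
  have := hmem θ
  rw [dotDir_add_smul, hpθ] at this
  exact absurd this (not_le.2 (lt_add_of_pos_right _ ht))

theorem exists_dotDir_eq_of_mem_frontier (hper : Function.Periodic h (2 * π))
    (hc : Continuous h) {p : ℝ × ℝ} (hp : p ∈ frontier (wulffShape h)) :
    ∃ θ, dotDir p θ = h θ := by
  have hpA : p ∈ wulffShape h := (isClosed_wulffShape h).frontier_subset hp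
  set F : ℝ → ℝ := fun φ => h φ - dotDir p φ
  have hF : IsCompact (range F) :=
    (hper.sub (periodic_dotDir p)).compact_of_continuous two_pi_pos.ne'
      (hc.sub (continuous_dotDir p))
  obtain ⟨_, ⟨θ, rfl⟩, hθ⟩ := hF.exists_isLeast (range_nonempty F)
  refine ⟨θ, ?_⟩
  by_contra hne
  have hm : 0 < F θ :=
    (sub_nonneg.2 (hpA θ)).lt_of_ne fun h0 => hne (sub_eq_zero.1 h0.symm).symm
  have hball : Metric.ball p (F θ / 2) ⊆ wulffShape h := fun q hq φ => by
    have := dotDir_sub_le p q φ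
    have := hθ ⟨φ, rfl⟩
    rw [Metric.mem_ball] at hq
    simp only [F] at *
    linarith
  exact hp.2 (interior_maximal hball Metric.isOpen_ball (Metric.mem_ball_self (half_pos hm)))

def envelope (h h' : ℝ → ℝ) (θ : ℝ) : ℝ × ℝ :=
  (h θ * cos θ - h' θ * sin θ, h θ * sin θ + h' θ * cos θ)

variable {h' h'' : ℝ → ℝ}

theorem dotDir_envelope (θ : ℝ) : dotDir (envelope h h' θ) θ = h θ := by
  simp only [dotDir, envelope]
  linear_combination h θ * sin_sq_add_cos_sq θ

theorem dotDir_rotate_envelope (θ : ℝ) :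
    dotDir ((envelope h h' θ).2, -(envelope h h' θ).1) θ = h' θ := by
  simp only [dotDir, envelope]
  linear_combination h' θ * sin_sq_add_cos_sq θ

theorem eq_envelope_of_dotDir_eq {p : ℝ × ℝ} {θ : ℝ} (hd : HasDerivAt h (h' θ) θ)
    (hp : p ∈ wulffShape h) (hpθ : dotDir p θ = h θ) : p = envelope h h' θ := by
  have hmin : IsLocalMin (fun φ => h φ - dotDir p φ) θ :=
    Eventually.of_forall fun φ => by simpa [hpθ] using hp φ
  have hzero := hmin.hasDerivAt_eq_zero (hd.sub (hasDerivAt_dotDir p θ))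
  refine ext_dotDir θ ?_ ?_
  · rw [hpθ, dotDir_envelope]
  · rw [dotDir_rotate_envelope]; linarith

theorem envelope_mem_wulffShape (hper : Function.Periodic h (2 * π))
    (hd : ∀ x, HasDerivAt h (h' x) x) (hd' : ∀ x, HasDerivAt h' (h'' x) x)
    (hpos : ∀ x, 0 ≤ h x + h'' x) (θ : ℝ) : envelope h h' θ ∈ wulffShape h := by
  set c := envelope h h' θ
  set G : ℝ → ℝ := fun φ => h φ - dotDir c φ
  have hG : ∀ x, HasDerivAt G (h' x - dotDir (c.2, -c.1) x) x := fun x =>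
    (hd x).sub (hasDerivAt_dotDir c x)
  have hG' : ∀ x, HasDerivAt (fun x => h' x - dotDir (c.2, -c.1) x) (h'' x + dotDir c x) x :=
    fun x => ((hd' x).sub (hasDerivAt_dotDir _ x)).congr_deriv (by simp only [dotDir]; ring)
  intro φ
  obtain ⟨ψ, hψ, hGψ⟩ :=
    (hper.sub (periodic_dotDir c)).exists_mem_Ico two_pi_pos φ (θ - π)
  have hψθ : |ψ - θ| ≤ π := abs_le.2 ⟨by linarith [hψ.1], by linarith [hψ.2]⟩
  have hGφ : 0 ≤ G ψ :=
    nonneg_of_add_deriv_deriv_nonneg hG hG' (fun x => by simpa [G] using hpos x)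
      (sub_eq_zero.2 (dotDir_envelope θ).symm) (sub_eq_zero.2 (dotDir_rotate_envelope θ).symm)
      hψθ
  rw [← show G φ = G ψ from hGψ] at hGφ
  exact sub_nonneg.1 hGφ

theorem frontier_wulffShape (hper : Function.Periodic h (2 * π))
    (hd : ∀ x, HasDerivAt h (h' x) x) (hmem : ∀ θ, envelope h h' θ ∈ wulffShape h) :
    frontier (wulffShape h) = range (envelope h h') := by
  refine Subset.antisymm (fun p hp => ?_) ?_
  · have hc : Continuous h := continuous_iff_continuousAt.2 fun x => (hd x).continuousAt
    obtain ⟨θ, hθ⟩ := exists_dotDir_eq_of_mem_frontier hper hc hp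
    exact ⟨θ, (eq_envelope_of_dotDir_eq (hd θ)
      ((isClosed_wulffShape h).frontier_subset hp) hθ).symm⟩
  · rintro _ ⟨θ, rfl⟩
    rw [(isClosed_wulffShape h).frontier_eq]
    exact ⟨hmem θ, notMem_interior_wulffShape (dotDir_envelope θ)⟩

theorem hasDerivAt_envelope (hd : ∀ x, HasDerivAt h (h' x) x)
    (hd' : ∀ x, HasDerivAt h' (h'' x) x) (θ : ℝ) :
    HasDerivAt (envelope h h') ((h θ + h'' θ) • (-sin θ, cos θ)) θ := by
  have h₁ := ((hd θ).mul (hasDerivAt_cos θ)).sub ((hd' θ).mul (hasDerivAt_sin θ))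
  have h₂ := ((hd θ).mul (hasDerivAt_sin θ)).add ((hd' θ).mul (hasDerivAt_cos θ))
  refine (h₁.prodMk h₂).congr_deriv ?_
  simp only [Prod.smul_mk, smul_eq_mul, Prod.mk.injEq]
  constructor <;> ring

end RealBody

open RealBody

/-- The curvature claim is encoded through the velocity of the boundary curve `γ`, parametrized
by the outward normal angle: `γ' = (h + h'') • (-sin θ, cos θ)`, so the radius of curvature is
`h + h''`. -/
theorem statement16 (h : ℝ → ℝ) (hper : ∀ θ, h (θ + 2 * Real.pi) = h θ)
    (hsm : ContDiff ℝ 2 h) (hpos : ∀ θ, 0 < h θ + deriv (deriv h) θ) :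
    ∃ A : Set (ℝ × ℝ), IsCompact A ∧ Convex ℝ A ∧ A.Nonempty ∧
      (∀ θ, RealBody.suppFn A θ = h θ) ∧
      frontier A = Set.range (fun θ : ℝ =>
        ((h θ * Real.cos θ - deriv h θ * Real.sin θ,
          h θ * Real.sin θ + deriv h θ * Real.cos θ) : ℝ × ℝ)) ∧
      ∀ θ : ℝ, HasDerivAt (fun θ : ℝ =>
          ((h θ * Real.cos θ - deriv h θ * Real.sin θ,
            h θ * Real.sin θ + deriv h θ * Real.cos θ) : ℝ × ℝ))
        ((h θ + deriv (deriv h) θ) • ((-Real.sin θ, Real.cos θ) : ℝ × ℝ)) θ := by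
  have hd : ∀ x, HasDerivAt h (deriv h x) x := fun x =>
    (hsm.differentiable two_ne_zero x).hasDerivAt
  have hd' : ∀ x, HasDerivAt (deriv h) (deriv (deriv h) x) x := fun x =>
    (hsm.differentiable_deriv_two x).hasDerivAt
  have hmem := envelope_mem_wulffShape hper hd hd' fun x => (hpos x).le
  exact ⟨wulffShape h, isCompact_wulffShape h, convex_wulffShape h, ⟨_, hmem 0⟩,
    fun θ => suppFn_wulffShape (hmem θ) (dotDir_envelope θ), frontier_wulffShape hper hd hmem,
    hasDerivAt_envelope hd hd'⟩
end
end
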